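/- arXiv:1001.2504 — 2 statements merged into one kernel-verified Lean document; each statement's English description precedes it below -/
import Mathlib

section
/- Let λ, μ be compositions of n with λ_l = 1 (last part of λ) and μ_m ≥ 2 (last part of μ), and let μ' = (μ_1,...,μ_{m-1}, μ_m - 1, 1). Then the index [P_{λ|μ} : P_{λ|μ'}] equals 2^{μ_m - 1}. -/
open Matrix

open Matrix

/-- Index of the block (w.r.t. the composition `l`) containing row/column `i`. -/
def blockIdx (l : List ℕ) (i : ℕ) : ℕ :=
  (List.range l.length).countP (fun k => (l.take (k + 1)).sum ≤ i)

/-- The submonoid of `GL n (F₂)` of matrices that are block upper triangular w.r.t. `l`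
and block lower triangular w.r.t. `m`. -/
def paraPairM (n : ℕ) (l m : List ℕ) : Submonoid (GL (Fin n) (ZMod 2)) where
  carrier := {g | (∀ i j : Fin n, blockIdx l j < blockIdx l i →
      (g : Matrix (Fin n) (Fin n) (ZMod 2)) i j = 0) ∧
    (∀ i j : Fin n, blockIdx m i < blockIdx m j →
      (g : Matrix (Fin n) (Fin n) (ZMod 2)) i j = 0)}
  one_mem' := by
    constructor <;> intro i j h <;>
    · have : i ≠ j := by rintro rfl; omega
      simp [Matrix.one_apply_ne this]
  mul_mem' := by
    rintro a b ⟨ha1, ha2⟩ ⟨hb1, hb2⟩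
    constructor
    · intro i j h
      show ((a : Matrix (Fin n) (Fin n) (ZMod 2)) * b) i j = 0
      rw [Matrix.mul_apply]
      apply Finset.sum_eq_zero
      intro k _
      rcases lt_or_ge (blockIdx l k) (blockIdx l i) with hk | hk
      · rw [ha1 i k hk, zero_mul]
      · rw [hb1 k j (lt_of_lt_of_le h hk), mul_zero]
    · intro i j h
      show ((a : Matrix (Fin n) (Fin n) (ZMod 2)) * b) i j = 0
      rw [Matrix.mul_apply]
      apply Finset.sum_eq_zero
      intro k _
      rcases lt_or_ge (blockIdx m i) (blockIdx m k) with hk | hk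
      · rw [ha2 i k hk, zero_mul]
      · rw [hb2 k j (lt_of_le_of_lt hk h), mul_zero]

/-- `P_{λ|μ} = P_λ ∩ (P_μ)ᵗ` as a subgroup of `GL n (F₂)`. -/
def paraPair (n : ℕ) (l m : List ℕ) : Subgroup (GL (Fin n) (ZMod 2)) where
  toSubmonoid := paraPairM n l m
  inv_mem' := by
    intro g hg
    have hord : g ^ orderOf g = 1 := pow_orderOf_eq_one g
    have hpos : 0 < orderOf g := orderOf_pos g
    have hinv : g⁻¹ = g ^ (orderOf g - 1) := by
      apply inv_eq_of_mul_eq_one_right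
      rw [← pow_succ']
      have h1 : orderOf g - 1 + 1 = orderOf g := by omega
      rw [h1, hord]
    rw [hinv]
    exact Submonoid.pow_mem _ hg _

/-- The standard parabolic subgroup `P_λ` of `GL n (F₂)`. -/
def para (n : ℕ) (l : List ℕ) : Subgroup (GL (Fin n) (ZMod 2)) := paraPair n l []

/-- The stopover set of a composition. -/
def stopovers (l : List ℕ) : Set ℕ :=
  {s | ∃ t, 0 < t ∧ t < l.length ∧ (l.take t).sum = s}

/-!
Let `e` be the last standard basis vector and `s = μ₁ + ⋯ + μ_{m-1}`. Because `λ_l = 1`, every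
`g ∈ P_λ` has last row `eᵀ`, and block lower triangularity for `μ` kills the entries of the
last column in the first `s` rows. So the orbit of `e` under `P_{λ|μ}` consists of the vectors
with last coordinate `1`, zero in the first `s` coordinates and arbitrary in the `μ_m - 1`
coordinates in between; each of them is the last column of the identity with that column
replaced, which lies in `P_{λ|μ}`. Refining the last block of `μ` to `(μ_m - 1, 1)` adds exactly
the condition that the last column be `e`, so `P_{λ|μ'}` is the stabilizer of `e` in `P_{λ|μ}`
and the index is the orbit size `2 ^ (μ_m - 1)`.
-/

section BlockIdx

variable (l : List ℕ) (i : ℕ)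

lemma blockIdx_le_length : blockIdx l i ≤ l.length :=
  List.countP_le_length.trans_eq List.length_range

variable {l i} in
lemma blockIdx_eq_length (h : l.sum ≤ i) : blockIdx l i = l.length := by
  have hall : ∀ k ∈ List.range l.length, decide ((l.take (k + 1)).sum ≤ i) = true := fun _ _ =>
    decide_eq_true (((List.take_sublist _ l).sum_le_sum fun _ _ => Nat.zero_le _).trans h)
  simpa [blockIdx] using List.countP_eq_length.mpr hall

variable {l i} in
lemma blockIdx_lt_length (h : i < l.sum) : blockIdx l i < l.length := by
  refine (blockIdx_le_length l i).lt_of_ne fun heq => ?_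
  have hne : 0 < l.length := List.length_pos_iff.mpr (by rintro rfl; simp at h)
  have hall := List.countP_eq_length.mp (heq.trans List.length_range.symm)
    (l.length - 1) (List.mem_range.mpr (by omega))
  rw [decide_eq_true_eq, Nat.sub_add_cancel hne, List.take_length] at hall
  omega

lemma blockIdx_append_singleton (a : ℕ) :
    blockIdx (l ++ [a]) i = blockIdx l i + if l.sum + a ≤ i then 1 else 0 := by
  unfold blockIdx
  rw [List.length_append, List.length_singleton, List.range_succ, List.countP_append]
  congr 1
  · refine List.countP_congr fun k hk => ?_
    rw [List.take_append_of_le_length (by simpa [Nat.succ_le_iff] using hk)]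
  · simp [List.take_of_length_le]

lemma blockIdx_append_singleton_of_lt {a : ℕ} (h : i < l.sum + a) :
    blockIdx (l ++ [a]) i = blockIdx l i := by
  simp [blockIdx_append_singleton, Nat.not_le.mpr h]

lemma blockIdx_mono : Monotone (blockIdx l) := fun _ _ hij =>
  List.countP_mono_left fun _ _ h => decide_eq_true ((of_decide_eq_true h).trans hij)

end BlockIdx

lemma ncard_setOf_forall_notMem_eq {ι R : Type*} [Fintype ι] [DecidableEq ι] [Fintype R]
    [DecidableEq R] (T : Finset ι) (w : ι → R) :
    {v : ι → R | ∀ i ∉ T, v i = w i}.ncard = Fintype.card R ^ T.card := by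
  have hpi : {v : ι → R | ∀ i ∉ T, v i = w i} =
      ↑(Fintype.piFinset fun i => if i ∈ T then Finset.univ else {w i}) := by
    ext v
    rw [Finset.mem_coe, Fintype.mem_piFinset]
    refine forall_congr' fun i => ?_
    split_ifs with hi <;> simp [hi]
  rw [hpi, Set.ncard_coe_finset, Fintype.card_piFinset]
  simp only [apply_ite Finset.card, Finset.card_univ, Finset.card_singleton]
  rw [Finset.prod_ite_mem, Finset.univ_inter, Finset.prod_const]

section ParaPair

variable {N b : ℕ} {L M l m : List ℕ}

lemma mem_paraPair_iff {n : ℕ} {g : GL (Fin n) (ZMod 2)} :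
    g ∈ paraPair n l m ↔
      (∀ i j : Fin n, blockIdx l j < blockIdx l i →
        (g : Matrix (Fin n) (Fin n) (ZMod 2)) i j = 0) ∧
      (∀ i j : Fin n, blockIdx m i < blockIdx m j →
        (g : Matrix (Fin n) (Fin n) (ZMod 2)) i j = 0) :=
  Iff.rfl

lemma paraPair_row_last (hL : L.sum = N) {g : GL (Fin (N + 1)) (ZMod 2)}
    (hg : g ∈ paraPair (N + 1) (L ++ [1]) m) :
    (g : Matrix (Fin (N + 1)) (Fin (N + 1)) (ZMod 2)) (Fin.last N) =
      Pi.single (Fin.last N) 1 := by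
  have hzero : ∀ j ≠ Fin.last N,
      (g : Matrix (Fin (N + 1)) (Fin (N + 1)) (ZMod 2)) (Fin.last N) j = 0 := by
    intro j hj
    have hjN : (j : ℕ) < N := Fin.val_lt_last hj
    apply (mem_paraPair_iff.mp hg).1
    rw [blockIdx_append_singleton_of_lt _ _ (by omega),
      blockIdx_append_singleton_of_lt _ _ (by simp [hL]), Fin.val_last, blockIdx_eq_length hL.le]
    exact blockIdx_lt_length (by omega)
  have hdiag := congrFun (congrFun g.mul_inv (Fin.last N)) (Fin.last N)
  rw [Matrix.mul_apply, one_apply_eq, Finset.sum_eq_single (Fin.last N)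
    (fun j _ hj => by rw [hzero j hj, zero_mul]) (by simp)] at hdiag
  ext j
  rcases eq_or_ne j (Fin.last N) with rfl | hj
  · rw [Pi.single_eq_same]
    exact (by decide : ∀ a c : ZMod 2, a * c = 1 → a = 1) _ _ hdiag
  · rw [hzero j hj, Pi.single_eq_of_ne hj]

lemma paraPair_col_last (hM : M.sum + b = N + 1) (hb : 0 < b) {g : GL (Fin (N + 1)) (ZMod 2)}
    (hg : g ∈ paraPair (N + 1) l (M ++ [b])) {i : Fin (N + 1)} (hi : (i : ℕ) < M.sum) :
    (g : Matrix (Fin (N + 1)) (Fin (N + 1)) (ZMod 2)) i (Fin.last N) = 0 := by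
  apply (mem_paraPair_iff.mp hg).2
  rw [blockIdx_append_singleton_of_lt _ _ (by omega),
    blockIdx_append_singleton_of_lt _ _ (by simp; omega), Fin.val_last,
    blockIdx_eq_length (i := N) (by omega)]
  exact blockIdx_lt_length hi

lemma mem_paraPair_split_iff (hM : M.sum + b = N + 1) (hb : 0 < b)
    {g : GL (Fin (N + 1)) (ZMod 2)} :
    g ∈ paraPair (N + 1) l (M ++ [b - 1, 1]) ↔ g ∈ paraPair (N + 1) l (M ++ [b]) ∧
      ∀ i : Fin (N + 1), M.sum ≤ i → (i : ℕ) < N →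
        (g : Matrix (Fin (N + 1)) (Fin (N + 1)) (ZMod 2)) i (Fin.last N) = 0 := by
  have hμ : ∀ x : Fin (N + 1), blockIdx (M ++ [b]) x = blockIdx M x := fun x =>
    blockIdx_append_singleton_of_lt _ _ (by omega)
  have hμ' : ∀ x : Fin (N + 1),
      blockIdx (M ++ [b - 1, 1]) x = blockIdx M x + if (x : ℕ) = N then 1 else 0 := by
    intro x
    rw [show M ++ [b - 1, 1] = M ++ [b - 1] ++ [1] by simp,
      blockIdx_append_singleton_of_lt _ _ (by simp; omega), blockIdx_append_singleton]
    simp only [show M.sum + (b - 1) = N by omega]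
    congr 1
    exact if_congr ⟨fun h => by omega, fun h => h.ge⟩ rfl rfl
  have hle := blockIdx_le_length M
  have heq : ∀ x : Fin (N + 1), M.sum ≤ x → blockIdx M x = M.length := fun _ =>
    blockIdx_eq_length
  have hlt : ∀ x : Fin (N + 1), (x : ℕ) < M.sum → blockIdx M x < M.length := fun _ =>
    blockIdx_lt_length
  have hlast := heq (Fin.last N) (by simp; omega)
  simp only [mem_paraPair_iff, hμ, hμ']
  constructor
  · rintro ⟨hl, hH⟩
    refine ⟨⟨hl, fun i j hij => hH i j ?_⟩, fun i hi hiN => hH i _ ?_⟩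
    · have hiN : (i : ℕ) ≠ N := fun h => by
        have := heq i (by omega)
        have := hle j
        omega
      rw [if_neg hiN]
      split_ifs <;> omega
    · rw [heq i hi, hlast, if_neg hiN.ne, Fin.val_last, if_pos rfl]
      omega
  · rintro ⟨⟨hl, hK⟩, hextra⟩
    refine ⟨hl, fun i j hij => ?_⟩
    by_cases hij' : blockIdx M i < blockIdx M j
    · exact hK i j hij'
    by_cases hjN : (j : ℕ) = N
    · obtain rfl : j = Fin.last N := Fin.ext hjN
      have hiN : (i : ℕ) ≠ N := fun h => by
        obtain rfl : i = Fin.last N := Fin.ext h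
        exact lt_irrefl _ hij
      rw [hlast] at hij'
      have hi : M.sum ≤ i := by
        by_contra h
        exact hij' (hlt i (by omega))
      exact hextra i hi (by have := Fin.is_le i; omega)
    · have hiN : (i : ℕ) ≠ N := fun h => by
        rw [if_pos h, if_neg hjN] at hij
        have := heq i (by omega)
        have := hle j
        omega
      rw [if_neg hiN, if_neg hjN] at hij
      exact absurd hij hij'

lemma updateCol_one_mem_paraPair (hM : M.sum + b = N + 1) {v : Fin (N + 1) → ZMod 2}
    (hv : ∀ i : Fin (N + 1), (i : ℕ) < M.sum → v i = 0)
    (hdet : ((1 : Matrix (Fin (N + 1)) (Fin (N + 1)) (ZMod 2)).updateCol (Fin.last N) v).det ≠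
      0) :
    GeneralLinearGroup.mkOfDetNeZero _ hdet ∈ paraPair (N + 1) l (M ++ [b]) := by
  have hoff : ∀ i j : Fin (N + 1), i ≠ j → j ≠ Fin.last N →
      ((1 : Matrix (Fin (N + 1)) (Fin (N + 1)) (ZMod 2)).updateCol (Fin.last N) v) i j = 0 :=
    fun i j hij hj => by rw [updateCol_ne hj, one_apply_ne hij]
  refine mem_paraPair_iff.mpr ⟨fun i j hij => ?_, fun i j hij => ?_⟩ <;>
    simp only [GeneralLinearGroup.val_mkOfDetNeZero]
  · refine hoff i j (by rintro rfl; exact hij.false) fun hj => ?_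
    subst hj
    exact (blockIdx_mono l (Fin.le_last i)).not_gt hij
  · by_cases hj : j = Fin.last N
    · subst hj
      rw [updateCol_self]
      refine hv i (Nat.lt_of_not_le fun hi => hij.ne ?_)
      rw [blockIdx_append_singleton_of_lt _ _ (by omega),
        blockIdx_append_singleton_of_lt _ _ (by simp; omega), Fin.val_last,
        blockIdx_eq_length hi, blockIdx_eq_length (by omega)]
    · exact hoff i j (by rintro rfl; exact hij.false) hj

lemma orbit_paraPair_single_last (hL : L.sum = N) (hM : M.sum + b = N + 1) (hb : 0 < b) :
    MulAction.orbit (paraPair (N + 1) (L ++ [1]) (M ++ [b]))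
        (Pi.single (Fin.last N) 1 : Fin (N + 1) → ZMod 2) =
      {v : Fin (N + 1) → ZMod 2 |
        ∀ i ∉ (Finset.Ico M.sum N).attachFin
            fun _ h => Nat.lt_succ_of_lt (Finset.mem_Ico.mp h).2,
          v i = (Pi.single (Fin.last N) 1 : Fin (N + 1) → ZMod 2) i} := by
  ext v
  constructor
  · rintro ⟨⟨g, hg⟩, rfl⟩ i hi
    rw [Finset.mem_attachFin, Finset.mem_Ico] at hi
    change ((g : Matrix (Fin (N + 1)) (Fin (N + 1)) (ZMod 2)) *ᵥ Pi.single (Fin.last N) 1) i = _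
    rw [mulVec_single_one, col_apply]
    rcases eq_or_ne i (Fin.last N) with rfl | hiN
    · exact congrFun (paraPair_row_last hL hg) _
    · rw [paraPair_col_last hM hb hg (by have := Fin.val_lt_last hiN; omega),
        Pi.single_eq_of_ne hiN]
  · intro hv
    have hfree : ∀ i : Fin (N + 1), ((i : ℕ) < M.sum ∨ i = Fin.last N) →
        v i = (Pi.single (Fin.last N) 1 : Fin (N + 1) → ZMod 2) i := fun i hi => hv i (by
      rw [Finset.mem_attachFin, Finset.mem_Ico]
      rcases hi with hi | rfl
      · omega
      · simp)
    have hdet : ((1 : Matrix (Fin (N + 1)) (Fin (N + 1)) (ZMod 2)).updateCol (Fin.last N) v).det =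
        1 := by
      have hsum := det_updateCol_sum (1 : Matrix (Fin (N + 1)) (Fin (N + 1)) (ZMod 2))
        (Fin.last N) v
      have hcol :
          (fun k => ∑ i, v i • (1 : Matrix (Fin (N + 1)) (Fin (N + 1)) (ZMod 2)) k i) = v := by
        ext k
        simp [one_apply]
      rw [hcol, det_one, smul_eq_mul, mul_one, hfree _ (Or.inr rfl), Pi.single_eq_same] at hsum
      exact hsum
    refine ⟨⟨_, updateCol_one_mem_paraPair hM (fun i hi => ?_) (hdet ▸ one_ne_zero)⟩, ?_⟩
    · rw [hfree i (Or.inl hi), Pi.single_eq_of_ne (fun h => by rw [h, Fin.val_last] at hi; omega)]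
    · change _ *ᵥ _ = v
      rw [GeneralLinearGroup.val_mkOfDetNeZero, mulVec_single_one]
      ext i
      simp

lemma subgroupOf_paraPair_eq_stabilizer (hL : L.sum = N) (hM : M.sum + b = N + 1) (hb : 0 < b) :
    (paraPair (N + 1) (L ++ [1]) (M ++ [b - 1, 1])).subgroupOf
        (paraPair (N + 1) (L ++ [1]) (M ++ [b])) =
      MulAction.stabilizer _ (Pi.single (Fin.last N) 1 : Fin (N + 1) → ZMod 2) := by
  ext ⟨g, hg⟩
  rw [Subgroup.mem_subgroupOf, MulAction.mem_stabilizer_iff, mem_paraPair_split_iff hM hb]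
  change (_ ∧ _) ↔ (g : Matrix (Fin (N + 1)) (Fin (N + 1)) (ZMod 2)) *ᵥ _ = _
  rw [mulVec_single_one, funext_iff]
  simp only [hg, true_and, col_apply]
  constructor
  · intro h i
    rcases eq_or_ne i (Fin.last N) with rfl | hiN
    · exact congrFun (paraPair_row_last hL hg) _
    have hiN' := Fin.val_lt_last hiN
    rw [Pi.single_eq_of_ne hiN]
    rcases lt_or_ge (i : ℕ) M.sum with hi | hi
    · exact paraPair_col_last hM hb hg hi
    · exact h i hi hiN'
  · intro h i _ hiN
    rw [h i, Pi.single_eq_of_ne fun h => by simp [h] at hiN]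

end ParaPair

theorem stmt12_general (n b : ℕ) (L M : List ℕ)
    (hLsum : (L ++ [1]).sum = n) (hMsum : (M ++ [b]).sum = n) (hb : 2 ≤ b) :
    (paraPair n (L ++ [1]) (M ++ [b - 1, 1])).relIndex (paraPair n (L ++ [1]) (M ++ [b])) =
      2 ^ (b - 1) := by
  obtain ⟨N, rfl⟩ : ∃ N, n = N + 1 := ⟨L.sum, by simpa using hLsum.symm⟩
  have hL : L.sum = N := by simpa using hLsum
  have hM : M.sum + b = N + 1 := by simpa using hMsum
  rw [Subgroup.relIndex, subgroupOf_paraPair_eq_stabilizer hL hM (by omega),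
    MulAction.index_stabilizer, orbit_paraPair_single_last hL hM (by omega),
    ncard_setOf_forall_notMem_eq, ZMod.card, Finset.card_attachFin, Nat.card_Ico]
  congr 1
  omega

theorem stmt12 (n b : ℕ) (L M : List ℕ)
    (hL : ∀ x ∈ L ++ [1], 0 < x) (hM : ∀ x ∈ M ++ [b], 0 < x)
    (hLsum : (L ++ [1]).sum = n) (hMsum : (M ++ [b]).sum = n) (hb : 2 ≤ b) :
    (paraPair n (L ++ [1]) (M ++ [b - 1, 1])).relIndex (paraPair n (L ++ [1]) (M ++ [b])) =
      2 ^ (b - 1) :=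
  stmt12_general n b L M hLsum hMsum hb
end

section
/- If the compositions λ and μ of n both have last part equal to 1 (λ_l = μ_m = 1), then |P_{λ|μ}| = |P_{λ̃|μ̃}|, where λ̃ and μ̃ are obtained by deleting the last parts. -/
open Matrix

open Matrix

/-!
Since `λ` and `μ` end in a block of size one, the last index `n` forms a block of its own in
both compositions, so a matrix of `P_{λ|μ}` has zero off-diagonal entries in its last row (block
upper triangularity for `λ`) and in its last column (block lower triangularity for `μ`). Over `𝔽₂`
its last diagonal entry is then forced to be `1`, so `P_{λ|μ}` is exactly the image of
`P_{λ̃|μ̃}` under the injective homomorphism `B ↦ diag(B, 1)`.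
-/

lemma blockIdx_le_length_s17 (L : List ℕ) (i : ℕ) : blockIdx L i ≤ L.length :=
  List.countP_le_length.trans List.length_range.le

lemma blockIdx_sum (L : List ℕ) : blockIdx L L.sum = L.length := by
  unfold blockIdx
  conv_rhs => rw [← List.length_range (n := L.length)]
  refine List.countP_eq_length.mpr fun k _ => ?_
  exact decide_eq_true ((List.take_sublist _ _).sum_le_sum (by simp))

lemma blockIdx_append_singleton_of_lt_s17 (L : List ℕ) {a i : ℕ} (hi : i < L.sum + a) :
    blockIdx (L ++ [a]) i = blockIdx L i := by
  unfold blockIdx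
  rw [List.length_append, List.length_singleton, List.range_succ, List.countP_append]
  have hlast : [L.length].countP (fun k => ((L ++ [a]).take (k + 1)).sum ≤ i) = 0 := by
    simpa using hi
  rw [hlast, Nat.add_zero]
  refine List.countP_congr fun k hk => ?_
  rw [List.take_append_of_le_length (List.mem_range.mp hk)]

lemma blockIdx_lt_length_s17 (L : List ℕ) {i : ℕ} (hi : i < L.sum) : blockIdx L i < L.length := by
  obtain ⟨L, a, rfl⟩ : ∃ L' a, L = L' ++ [a] := by
    rcases List.eq_nil_or_concat L with rfl | h
    · simp at hi
    · simpa only [List.concat_eq_append] using h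
  rw [List.sum_append, List.sum_singleton] at hi
  rw [blockIdx_append_singleton_of_lt_s17 L hi, List.length_append, List.length_singleton,
    Nat.lt_succ_iff]
  exact blockIdx_le_length_s17 L i

namespace Matrix

variable {R : Type*} [Semiring R] {n : ℕ}

def extendByOne (B : Matrix (Fin n) (Fin n) R) : Matrix (Fin (n + 1)) (Fin (n + 1)) R :=
  Matrix.of fun i j =>
    Fin.lastCases (Fin.lastCases 1 (fun _ => 0) j) (fun i' => Fin.lastCases 0 (B i') j) i

section extendByOne

variable (B : Matrix (Fin n) (Fin n) R) (i j : Fin n)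

@[simp] lemma extendByOne_castSucc_castSucc : extendByOne B i.castSucc j.castSucc = B i j := by
  simp [extendByOne]

@[simp] lemma extendByOne_castSucc_last : extendByOne B i.castSucc (Fin.last n) = 0 := by
  simp [extendByOne]

@[simp] lemma extendByOne_last_castSucc : extendByOne B (Fin.last n) j.castSucc = 0 := by
  simp [extendByOne]

@[simp] lemma extendByOne_last_last : extendByOne B (Fin.last n) (Fin.last n) = 1 := by
  simp [extendByOne]

end extendByOne

lemma extendByOne_injective : Function.Injective (extendByOne (R := R) (n := n)) := by
  intro B C h
  ext i j
  simpa using congr_fun₂ h i.castSucc j.castSucc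

lemma eq_extendByOne_submatrix {A : Matrix (Fin (n + 1)) (Fin (n + 1)) R}
    (hrow : ∀ j : Fin n, A (Fin.last n) j.castSucc = 0)
    (hcol : ∀ i : Fin n, A i.castSucc (Fin.last n) = 0) (hlast : A (Fin.last n) (Fin.last n) = 1) :
    A = extendByOne (A.submatrix Fin.castSucc Fin.castSucc) := by
  ext i j
  induction i using Fin.lastCases <;> induction j using Fin.lastCases <;> simp [*]

def extendByOneHom : Matrix (Fin n) (Fin n) R →* Matrix (Fin (n + 1)) (Fin (n + 1)) R where
  toFun := extendByOne
  map_one' := by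
    ext i j
    induction i using Fin.lastCases <;> induction j using Fin.lastCases <;>
      simp [one_apply, (Fin.castSucc_lt_last _).ne, (Fin.castSucc_lt_last _).ne']
  map_mul' B C := by
    ext i j
    induction i using Fin.lastCases <;> induction j using Fin.lastCases <;>
      simp [mul_apply, Fin.sum_univ_castSucc]

end Matrix

lemma Units.mem_range_map_of_val_mem {M N : Type*} [Monoid M] [Monoid N] {f : M →* N}
    (hf : Function.Injective f) {u : Nˣ} (hu : (u : N) ∈ Set.range f)
    (hu' : ((u⁻¹ : Nˣ) : N) ∈ Set.range f) : u ∈ (Units.map f).range := by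
  obtain ⟨a, ha⟩ := hu
  obtain ⟨b, hb⟩ := hu'
  refine ⟨⟨a, b, hf ?_, hf ?_⟩, Units.ext ha⟩ <;> simp [ha, hb]

namespace Matrix.GeneralLinearGroup

variable {R : Type*} [Semiring R] {n : ℕ}

def extendByOne : GL (Fin n) R →* GL (Fin (n + 1)) R := Units.map extendByOneHom

@[simp] lemma val_extendByOne (g : GL (Fin n) R) :
    (extendByOne g : Matrix (Fin (n + 1)) (Fin (n + 1)) R) = Matrix.extendByOne g := rfl

lemma extendByOne_injective : Function.Injective (extendByOne (R := R) (n := n)) :=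
  Units.map_injective Matrix.extendByOne_injective

end Matrix.GeneralLinearGroup

section paraPair

open Matrix.GeneralLinearGroup (extendByOne)

variable {n : ℕ} {L M : List ℕ}

lemma blockIdx_append_one_castSucc (hL : L.sum = n) (i : Fin n) :
    blockIdx (L ++ [1]) (i.castSucc : Fin (n + 1)) = blockIdx L i :=
  blockIdx_append_singleton_of_lt_s17 L (by omega)

lemma blockIdx_castSucc_lt_last (hL : L.sum = n) (i : Fin n) :
    blockIdx (L ++ [1]) (i.castSucc : Fin (n + 1)) <
      blockIdx (L ++ [1]) (Fin.last n : Fin (n + 1)) := by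
  subst hL
  rw [blockIdx_append_one_castSucc rfl, Fin.val_last, blockIdx_append_singleton_of_lt_s17 L (by omega),
    blockIdx_sum]
  exact blockIdx_lt_length_s17 L i.2

section

variable {g : GL (Fin (n + 1)) (ZMod 2)} (hg : g ∈ paraPair (n + 1) (L ++ [1]) (M ++ [1]))
include hg

lemma paraPair_apply_last_castSucc (hL : L.sum = n) (j : Fin n) :
    (g : Matrix (Fin (n + 1)) (Fin (n + 1)) (ZMod 2)) (Fin.last n) j.castSucc = 0 :=
  hg.1 _ _ (blockIdx_castSucc_lt_last hL j)

lemma paraPair_apply_castSucc_last (hM : M.sum = n) (i : Fin n) :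
    (g : Matrix (Fin (n + 1)) (Fin (n + 1)) (ZMod 2)) i.castSucc (Fin.last n) = 0 :=
  hg.2 _ _ (blockIdx_castSucc_lt_last hM i)

lemma paraPair_apply_last_last (hL : L.sum = n) :
    (g : Matrix (Fin (n + 1)) (Fin (n + 1)) (ZMod 2)) (Fin.last n) (Fin.last n) = 1 := by
  have h := congr_fun₂ g.mul_inv (Fin.last n) (Fin.last n)
  rw [Matrix.mul_apply, Fin.sum_univ_castSucc, Matrix.one_apply_eq] at h
  simp only [paraPair_apply_last_castSucc hg hL, zero_mul, Finset.sum_const_zero, zero_add] at h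
  exact isUnit_iff_eq_one.mp (.of_mul_eq_one _ h)

lemma paraPair_val_mem_range_extendByOne (hL : L.sum = n) (hM : M.sum = n) :
    (g : Matrix (Fin (n + 1)) (Fin (n + 1)) (ZMod 2)) ∈ Set.range Matrix.extendByOne :=
  ⟨_, (Matrix.eq_extendByOne_submatrix (paraPair_apply_last_castSucc hg hL)
    (paraPair_apply_castSucc_last hg hM) (paraPair_apply_last_last hg hL)).symm⟩

end

lemma extendByOne_mem_paraPair_iff (hL : L.sum = n) (hM : M.sum = n) (h : GL (Fin n) (ZMod 2)) :
    extendByOne h ∈ paraPair (n + 1) (L ++ [1]) (M ++ [1]) ↔ h ∈ paraPair n L M := by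
  refine ⟨fun ⟨hup, hlow⟩ => ⟨fun i j hij => ?_, fun i j hij => ?_⟩,
    fun ⟨hup, hlow⟩ => ⟨fun i j hij => ?_, fun i j hij => ?_⟩⟩
  · simpa using hup i.castSucc j.castSucc (by rwa [blockIdx_append_one_castSucc hL,
      blockIdx_append_one_castSucc hL])
  · simpa using hlow i.castSucc j.castSucc (by rwa [blockIdx_append_one_castSucc hM,
      blockIdx_append_one_castSucc hM])
  · induction i using Fin.lastCases <;> induction j using Fin.lastCases
    · exact absurd hij (lt_irrefl _)
    · simp
    · simp
    · rw [blockIdx_append_one_castSucc hL, blockIdx_append_one_castSucc hL] at hij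
      simpa using hup _ _ hij
  · induction i using Fin.lastCases <;> induction j using Fin.lastCases
    · exact absurd hij (lt_irrefl _)
    · simp
    · simp
    · rw [blockIdx_append_one_castSucc hM, blockIdx_append_one_castSucc hM] at hij
      simpa using hlow _ _ hij

lemma paraPair_append_one_eq_map (hL : L.sum = n) (hM : M.sum = n) :
    paraPair (n + 1) (L ++ [1]) (M ++ [1]) = (paraPair n L M).map extendByOne := by
  ext g
  constructor
  · intro hg
    obtain ⟨h, rfl⟩ := Units.mem_range_map_of_val_mem (f := Matrix.extendByOneHom) (u := g)
      Matrix.extendByOne_injective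
      (paraPair_val_mem_range_extendByOne hg hL hM)
      (paraPair_val_mem_range_extendByOne (inv_mem hg) hL hM)
    exact ⟨h, (extendByOne_mem_paraPair_iff hL hM h).mp hg, rfl⟩
  · rintro ⟨h, hh, rfl⟩
    exact (extendByOne_mem_paraPair_iff hL hM h).mpr hh

end paraPair

theorem stmt17_general (n : ℕ) (L M : List ℕ)
    (hLsum : (L ++ [1]).sum = n) (hMsum : (M ++ [1]).sum = n) :
    Nat.card (paraPair n (L ++ [1]) (M ++ [1])) = Nat.card (paraPair (n - 1) L M) := by
  rw [List.sum_append, List.sum_singleton] at hLsum hMsum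
  subst hLsum
  rw [Nat.add_sub_cancel, paraPair_append_one_eq_map rfl (by omega)]
  exact Subgroup.card_map_of_injective Matrix.GeneralLinearGroup.extendByOne_injective

theorem stmt17 (n : ℕ) (L M : List ℕ)
    (hL : ∀ x ∈ L ++ [1], 0 < x) (hM : ∀ x ∈ M ++ [1], 0 < x)
    (hLsum : (L ++ [1]).sum = n) (hMsum : (M ++ [1]).sum = n) :
    Nat.card (paraPair n (L ++ [1]) (M ++ [1])) = Nat.card (paraPair (n - 1) L M) :=
  stmt17_general n L M hLsum hMsum
end
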